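/- For m,n ≥ 0 and all 1 ≤ k ≤ F(m), 1 ≤ l ≤ F(n), the number of distinct k × l subarrays occurring in the Fibonacci array f_{m,n} equals p_k(f_m) · p_l(f_n), where p_k(f_m) and p_l(f_n) are the numbers of distinct length-k factors of the 1D Fibonacci word f_m and of distinct length-l factors of f_n, respectively. -/

import Mathlib

/-- Fibonacci numbers: F(0)=1, F(1)=1, F(n+2)=F(n+1)+F(n). -/
def F : ℕ → ℕ
  | 0 => 1
  | 1 => 1
  | n + 2 => F (n + 1) + F n

/-- Finite Fibonacci words over {a,b} coded as Fin 2 (a=0, b=1). -/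
def fibWord : ℕ → List (Fin 2)
  | 0 => [0]
  | 1 => [1]
  | n + 2 => fibWord (n + 1) ++ fibWord n

/-- The Fibonacci arrays f_{m,n} over {a,b,c,d} coded as Fin 2 × Fin 2,
with a=(0,0), b=(0,1), c=(1,0), d=(1,1); `fibArr m n i j` is the (i,j) entry
(0-indexed, only indices i < F m, j < F n are meaningful). -/
def fibArr : ℕ → ℕ → ℕ → ℕ → Fin 2 × Fin 2
  | 0, 0, _, _ => (0, 0)
  | 0, 1, _, _ => (0, 1)
  | 1, 0, _, _ => (1, 0)
  | 1, 1, _, _ => (1, 1)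
  | 0, n + 2, i, j =>
      if j < F (n + 1) then fibArr 0 (n + 1) i j else fibArr 0 n i (j - F (n + 1))
  | 1, n + 2, i, j =>
      if j < F (n + 1) then fibArr 1 (n + 1) i j else fibArr 1 n i (j - F (n + 1))
  | m + 2, k, i, j =>
      if i < F (m + 1) then fibArr (m + 1) k i j else fibArr m k (i - F (m + 1)) j
  termination_by m n => (m, n)

/-- The r × l subarray of u with top-left entry at (i,j). -/
def subarr (u : ℕ → ℕ → Fin 2 × Fin 2) (i j r l : ℕ) : Fin r × Fin l → Fin 2 × Fin 2 :=
  fun p => u (i + p.1.val) (j + p.2.val)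

/-- Number of square occurrences in a finite word. -/
noncomputable def sqOcc (w : List (Fin 2)) : ℕ :=
  {p : ℕ × ℕ | 1 ≤ p.2 ∧ p.1 + 2 * p.2 ≤ w.length ∧
    ∀ t < p.2, w.getD (p.1 + t) 0 = w.getD (p.1 + p.2 + t) 0}.ncard

/-- R(n): number of square occurrences in f_n. -/
noncomputable def R (n : ℕ) : ℕ := sqOcc (fibWord n)

/-- Number of distinct length-k factors of a word. -/
noncomputable def pk (w : List (Fin 2)) (k : ℕ) : ℕ :=
  {v : List (Fin 2) | v.length = k ∧ v <:+: w}.ncard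

/-
The Fibonacci array is the outer product of two Fibonacci words: `f_{m,n}(i,j) = (f_m(i), f_n(j))`,
since the row and column concatenations of the array mirror the concatenations of `f_m` and `f_n`.
A `k × l` subarray is therefore the outer product of a length-`k` factor of `f_m` and a length-`l`
factor of `f_n`, and for `k, l ≥ 1` both factors can be read back from it (along a column and along
a row), so subarrays correspond bijectively to pairs of factors.
-/

open Set

lemma fibWord_length : ∀ n, (fibWord n).length = F n
  | 0 => rfl
  | 1 => rfl
  | n + 2 => by simp [fibWord, F, fibWord_length (n + 1), fibWord_length n]

lemma getD_fibWord_add_two (n i : ℕ) (d : Fin 2) :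
    (fibWord (n + 2)).getD i d =
      if i < F (n + 1) then (fibWord (n + 1)).getD i d else (fibWord n).getD (i - F (n + 1)) d := by
  rw [fibWord]
  split_ifs with h
  · exact List.getD_append _ _ _ _ (by rwa [fibWord_length])
  · rw [List.getD_append_right _ _ _ _ (by rw [fibWord_length]; omega), fibWord_length]

lemma fibArr_eq_getD : ∀ m n i j, i < F m → j < F n →
    fibArr m n i j = ((fibWord m).getD i 0, (fibWord n).getD j 0)
  | 0, 0, i, j, hi, hj | 0, 1, i, j, hi, hj | 1, 0, i, j, hi, hj | 1, 1, i, j, hi, hj => by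
      simp only [F, Nat.lt_one_iff] at hi hj
      subst hi hj
      rw [fibArr]
      rfl
  | 0, n + 2, i, j, hi, hj | 1, n + 2, i, j, hi, hj => by
      rw [fibArr, getD_fibWord_add_two]
      simp only [F] at hj
      split_ifs with h
      · exact fibArr_eq_getD _ (n + 1) i j hi h
      · exact fibArr_eq_getD _ n i _ hi (by omega)
  | m + 2, n, i, j, hi, hj => by
      rw [fibArr, getD_fibWord_add_two]
      simp only [F] at hi
      split_ifs with h
      · exact fibArr_eq_getD (m + 1) n i j h hj
      · exact fibArr_eq_getD m n _ j (by omega) hj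
  termination_by m n => (m, n)

section Windows

variable {α β : Type*}

/-- The length-`k` factors of `u`, read as functions on `Fin k`. -/
def finWindows (u : List α) (k : ℕ) : Set (Fin k → α) :=
  {x | ∃ i, i + k ≤ u.length ∧ ∀ t : Fin k, u[i + t]? = some (x t)}

lemma image_ofFn_finWindows (u : List α) (k : ℕ) :
    List.ofFn '' finWindows u k = {v | v.length = k ∧ v <:+: u} := by
  ext v
  constructor
  · rintro ⟨x, ⟨i, hi, hx⟩, rfl⟩
    refine ⟨List.length_ofFn,
      List.infix_iff_getElem?.mpr ⟨i, by simpa [add_comm] using hi, fun t ht => ?_⟩⟩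
    rw [List.getElem_ofFn, add_comm]
    exact hx ⟨t, by simpa using ht⟩
  · rintro ⟨rfl, hv⟩
    obtain ⟨i, hi, hx⟩ := List.infix_iff_getElem?.mp hv
    refine ⟨v.get, ⟨i, by omega, fun t => ?_⟩, List.ofFn_get v⟩
    rw [add_comm]
    exact hx t t.2

lemma ncard_finWindows (u : List α) (k : ℕ) :
    (finWindows u k).ncard = {v | v.length = k ∧ v <:+: u}.ncard := by
  rw [← image_ofFn_finWindows, ncard_image_of_injective _ List.ofFn_injective]

lemma injective_uncurry_prodMap {ι κ : Type*} [Nonempty ι] [Nonempty κ] :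
    Function.Injective (Function.uncurry (Prod.map : (ι → α) → (κ → β) → _)) := by
  rintro ⟨x, y⟩ ⟨x', y'⟩ h
  obtain ⟨i⟩ := ‹Nonempty ι›
  obtain ⟨j⟩ := ‹Nonempty κ›
  exact Prod.ext (funext fun t => congrArg Prod.fst (congrFun h (t, j)))
    (funext fun s => congrArg Prod.snd (congrFun h (i, s)))

lemma setOf_subarray_eq_image_prodMap {a : ℕ → ℕ → α × β} {u : List α} {w : List β} {d : α}
    {e : β} (ha : ∀ i j, i < u.length → j < w.length → a i j = (u.getD i d, w.getD j e))
    (k l : ℕ) :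
    {X : Fin k × Fin l → α × β | ∃ i₀ j₀ : ℕ, i₀ + k ≤ u.length ∧ j₀ + l ≤ w.length ∧
        ∀ p : Fin k × Fin l, X p = a (i₀ + p.1.val) (j₀ + p.2.val)} =
      Function.uncurry Prod.map '' finWindows u k ×ˢ finWindows w l := by
  ext X
  constructor
  · rintro ⟨i₀, j₀, hi, hj, hX⟩
    refine ⟨(fun t => u.getD (i₀ + t) d, fun s => w.getD (j₀ + s) e),
      ⟨⟨i₀, hi, fun t => ?_⟩, ⟨j₀, hj, fun s => ?_⟩⟩, funext fun p => ?_⟩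
    · rw [List.getElem?_eq_getElem (by omega)]
      exact congrArg some (List.getD_eq_getElem _ _ _).symm
    · rw [List.getElem?_eq_getElem (by omega)]
      exact congrArg some (List.getD_eq_getElem _ _ _).symm
    · rw [hX p, ha _ _ (by omega) (by omega)]
      rfl
  · rintro ⟨⟨x, y⟩, ⟨⟨i₀, hi, hx⟩, ⟨j₀, hj, hy⟩⟩, rfl⟩
    refine ⟨i₀, j₀, hi, hj, fun p => ?_⟩
    rw [ha _ _ (by omega) (by omega), List.getD_eq_getElem?_getD, List.getD_eq_getElem?_getD,
      hx, hy]
    rfl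

end Windows

theorem stmt15_general (m n k l : ℕ) (hk1 : 1 ≤ k) (hl1 : 1 ≤ l) :
    {X : Fin k × Fin l → Fin 2 × Fin 2 |
      ∃ i₀ j₀ : ℕ, i₀ + k ≤ F m ∧ j₀ + l ≤ F n ∧
        ∀ p : Fin k × Fin l, X p = fibArr m n (i₀ + p.1.val) (j₀ + p.2.val)}.ncard
      = pk (fibWord m) k * pk (fibWord n) l := by
  have : Nonempty (Fin k) := Fin.pos_iff_nonempty.mp hk1
  have : Nonempty (Fin l) := Fin.pos_iff_nonempty.mp hl1
  have hfib : ∀ i j, i < (fibWord m).length → j < (fibWord n).length →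
      fibArr m n i j = ((fibWord m).getD i 0, (fibWord n).getD j 0) := by
    simpa only [fibWord_length] using fibArr_eq_getD m n
  rw [← fibWord_length m, ← fibWord_length n, setOf_subarray_eq_image_prodMap hfib,
    ncard_image_of_injective _ injective_uncurry_prodMap, ncard_prod, ncard_finWindows,
    ncard_finWindows, pk, pk]

/-- for m,n ≥ 0 and 1 ≤ k ≤ F(m), 1 ≤ l ≤ F(n), the number of distinct
k × l subarrays of the Fibonacci array f_{m,n} equals p_k(f_m) · p_l(f_n). -/
theorem stmt15 (m n k l : ℕ) (hk1 : 1 ≤ k) (hk2 : k ≤ F m) (hl1 : 1 ≤ l) (hl2 : l ≤ F n) :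
    {X : Fin k × Fin l → Fin 2 × Fin 2 |
      ∃ i₀ j₀ : ℕ, i₀ + k ≤ F m ∧ j₀ + l ≤ F n ∧
        ∀ p : Fin k × Fin l, X p = fibArr m n (i₀ + p.1.val) (j₀ + p.2.val)}.ncard
      = pk (fibWord m) k * pk (fibWord n) l :=
  stmt15_general m n k l hk1 hl1
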